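/- arXiv:1507.07492 — 4 statements merged into one kernel-verified Lean document; each statement's English description precedes it below -/
import Mathlib

section
/- Let u: ℤ → ℂ be a finitely supported 1D filter with û(0) = 1, let n ≥ 1, and let a^{2D} be the 2D filter defined by â^{2D}(ω₁,ω₂) = ½[û(ω₁+ω₂) + û(ω₁−ω₂)e^{−iω₂}]. Then a^{2D} has order n sum rules with respect to M_{√2} if and only if u has order n linear-phase moments with phase 1/2. -/
open Complex Real

/-- Fourier series of a finitely supported 1D filter. -/
noncomputable def fhat1 (u : ℤ → ℂ) (ω : ℝ) : ℂ :=
  ∑ᶠ k : ℤ, u k * Complex.exp (-(Complex.I) * (k : ℂ) * (ω : ℂ))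

/-- Fourier series of a finitely supported 2D filter. -/
noncomputable def fhat2 (a : ℤ × ℤ → ℂ) (ω : ℝ × ℝ) : ℂ :=
  ∑ᶠ k : ℤ × ℤ, a k * Complex.exp (-(Complex.I) * ((k.1 : ℂ) * (ω.1 : ℂ) + (k.2 : ℂ) * (ω.2 : ℂ)))

/-- Order `m` sum rules with respect to the quincunx matrix `M_{√2}`. -/
def SumRules2D (a : ℤ × ℤ → ℂ) (m : ℕ) : Prop :=
  fhat2 a (0, 0) = 1 ∧ ∀ μ : ℕ × ℕ, μ.1 + μ.2 < m →
    ∑ᶠ k : ℤ × ℤ, ((-1 : ℂ) ^ (k.1 + k.2) * a k * (k.1 : ℂ) ^ μ.1 * (k.2 : ℂ) ^ μ.2) = 0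

/-- A 1D filter has order `n` linear-phase moments with phase `1/2`. -/
def LPM1D (u : ℤ → ℂ) (n : ℕ) : Prop :=
  ∀ j : ℕ, j < n → ∑ᶠ k : ℤ, u k * (k : ℂ) ^ j = (1 / 2 : ℂ) ^ j

/-!
Along `ω = (x + π, y + π)` the factor `e^{-i k·ω}` becomes `(-1)^{k₁+k₂} e^{-i(k₁x + k₂y)}`, so the
signed moments `M(p, q) = ∑ (-1)^{k₁+k₂} a(k) k₁^p k₂^q` are, up to `(-i)^{p+q}`, mixed derivatives
at `0` of an exponential sum. Comparing them with the derivatives of the right-hand side of the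
defining relation gives `2 M(p, q) = m_{p+q} - ∑ u(k) k^p (1 - k)^q`, where `m_j = ∑ u(k) k^j`.
Linear-phase moments of order `n` say that `f ↦ ∑ u(k) f(k)` agrees with evaluation at `1/2` on
polynomials of degree `< n`, so both terms equal `2^{-(p+q)}`. Conversely, if `M(p, j - p) = 0` for
all `p ≤ j`, summing against `binom(j, p)` and using `∑ₚ binom(j, p) k^p (1 - k)^{j-p} = 1` gives
`2^j m_j = m_0 = 1`.
-/

open Finset Function Polynomial

theorem finsum_eq_sum_of_forall_notMem_eq_zero {α M : Type*} [AddCommMonoid M] {f : α → M}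
    {s : Finset α} (hf : ∀ k ∉ s, f k = 0) : ∑ᶠ k, f k = ∑ k ∈ s, f k :=
  finsum_eq_sum_of_support_subset f fun k hk => by_contra fun h => hk (hf k h)

section ExponentialSums

variable {ι ι' : Type*}

theorem iteratedDeriv_sum_mul_cexp (s : Finset ι) (c b : ι → ℂ) (j : ℕ) :
    iteratedDeriv j (fun t : ℝ => ∑ k ∈ s, c k * exp (b k * t)) =
      fun t : ℝ => ∑ k ∈ s, c k * b k ^ j * exp (b k * t) := by
  induction j generalizing c with
  | zero => simp
  | succ j ih =>
    have hderiv : deriv (fun t : ℝ => ∑ k ∈ s, c k * exp (b k * t)) =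
        fun t : ℝ => ∑ k ∈ s, c k * b k * exp (b k * t) := by
      funext t
      refine (HasDerivAt.fun_sum fun k _ => ?_).deriv
      have := (((hasDerivAt_id (t : ℝ)).ofReal_comp.const_mul (b k)).cexp).const_mul (c k)
      simpa [mul_comm, mul_left_comm, mul_assoc] using this
    rw [iteratedDeriv_succ', hderiv, ih]
    simp only [pow_succ, mul_assoc, mul_comm (b _)]

theorem sum_mul_pow_eq_of_sum_mul_cexp_eq {s : Finset ι} {s' : Finset ι'} {c b : ι → ℂ}
    {c' b' : ι' → ℂ}
    (h : ∀ t : ℝ, ∑ k ∈ s, c k * exp (b k * t) = ∑ k ∈ s', c' k * exp (b' k * t)) (j : ℕ) :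
    ∑ k ∈ s, c k * b k ^ j = ∑ k ∈ s', c' k * b' k ^ j := by
  simpa [iteratedDeriv_sum_mul_cexp] using congr_fun (congrArg (iteratedDeriv j) (funext h)) 0

theorem sum_mul_pow_mul_pow_eq_of_sum_mul_cexp_eq {s : Finset ι} {s' : Finset ι'}
    {c b d : ι → ℂ} {c' b' d' : ι' → ℂ}
    (h : ∀ x y : ℝ, ∑ k ∈ s, c k * exp (b k * x + d k * y) =
      ∑ k ∈ s', c' k * exp (b' k * x + d' k * y)) (p q : ℕ) :
    ∑ k ∈ s, c k * b k ^ p * d k ^ q = ∑ k ∈ s', c' k * b' k ^ p * d' k ^ q := by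
  refine sum_mul_pow_eq_of_sum_mul_cexp_eq (fun y => ?_) q
  have := sum_mul_pow_eq_of_sum_mul_cexp_eq (s := s) (s' := s')
    (c := fun k => c k * exp (d k * y)) (c' := fun k => c' k * exp (d' k * y))
    (b := b) (b' := b')
    (fun x => by simpa only [mul_assoc, ← Complex.exp_add, add_comm] using h x y) p
  simpa only [mul_right_comm] using this

end ExponentialSums

section Quadrature

variable {ι R : Type*}

theorem sum_mul_eval_eq_eval_of_sum_mul_pow_eq [CommSemiring R] {s : Finset ι} {w x : ι → R}
    {c : R} {n : ℕ} (h : ∀ j < n, ∑ k ∈ s, w k * x k ^ j = c ^ j) {f : R[X]}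
    (hf : f.natDegree < n) :
    ∑ k ∈ s, w k * f.eval (x k) = f.eval c := by
  simp_rw [eval_eq_sum_range' hf, mul_sum]
  rw [sum_comm]
  refine sum_congr rfl fun j hj => ?_
  rw [← h j (mem_range.1 hj), mul_sum]
  exact sum_congr rfl fun k _ => by ring

theorem two_pow_mul_sum_mul_pow_eq_sum [CommRing R] {s : Finset ι} {w x : ι → R} {j : ℕ}
    (h : ∀ p ≤ j, ∑ k ∈ s, w k * x k ^ p * (1 - x k) ^ (j - p) = ∑ k ∈ s, w k * x k ^ j) :
    2 ^ j * ∑ k ∈ s, w k * x k ^ j = ∑ k ∈ s, w k := by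
  calc 2 ^ j * ∑ k ∈ s, w k * x k ^ j
      = ∑ p ∈ range (j + 1), (∑ k ∈ s, w k * x k ^ j) * j.choose p := by
        rw [← mul_sum, ← Nat.cast_sum, Nat.sum_range_choose]; push_cast; ring
    _ = ∑ p ∈ range (j + 1), (∑ k ∈ s, w k * x k ^ p * (1 - x k) ^ (j - p)) * j.choose p :=
        sum_congr rfl fun p hp => by rw [h p (Nat.lt_succ_iff.1 (mem_range.1 hp))]
    _ = ∑ k ∈ s, w k * (x k + (1 - x k)) ^ j := by
        simp_rw [add_pow, mul_sum, sum_mul]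
        rw [sum_comm]
        exact sum_congr rfl fun k _ => sum_congr rfl fun p _ => by ring
    _ = ∑ k ∈ s, w k := by simp

end Quadrature

section Filters

variable {u : ℤ → ℂ} {a : ℤ × ℤ → ℂ} {su : Finset ℤ} {sa : Finset (ℤ × ℤ)}

theorem fhat1_eq_sum (hu : ∀ k ∉ su, u k = 0) (ω : ℝ) :
    fhat1 u ω = ∑ k ∈ su, u k * exp (-I * k * ω) :=
  finsum_eq_sum_of_forall_notMem_eq_zero fun k hk => by simp [hu k hk]

theorem fhat1_add_two_pi (u : ℤ → ℂ) (ω : ℝ) : fhat1 u (ω + 2 * π) = fhat1 u ω := by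
  refine finsum_congr fun k => ?_
  rw [show -I * k * ((ω + 2 * π : ℝ) : ℂ) = -I * k * ω + (-k : ℤ) * (2 * π * I) by push_cast; ring,
    Complex.exp_add, exp_int_mul_two_pi_mul_I, mul_one]

theorem fhat2_add_pi_eq_sum (ha : ∀ k ∉ sa, a k = 0) (x y : ℝ) :
    fhat2 a (x + π, y + π) =
      ∑ k ∈ sa, (-1 : ℂ) ^ (k.1 + k.2) * a k * exp (-I * k.1 * x + -I * k.2 * y) := by
  rw [fhat2, finsum_eq_sum_of_forall_notMem_eq_zero fun k hk => by simp [ha k hk]]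
  refine sum_congr rfl fun k _ => ?_
  rw [show -I * ((k.1 : ℂ) * ((x + π : ℝ) : ℂ) + k.2 * ((y + π : ℝ) : ℂ)) =
      (k.1 + k.2 : ℤ) * -(π * I) + (-I * k.1 * x + -I * k.2 * y) by push_cast; ring,
    Complex.exp_add, exp_int_mul, exp_neg_pi_mul_I]
  ring

theorem sum_neg_one_zpow_mul_cexp_eq (hu : ∀ k ∉ su, u k = 0) (ha : ∀ k ∉ sa, a k = 0)
    (hfa : ∀ ω : ℝ × ℝ, fhat2 a ω
      = (1 / 2 : ℂ) * (fhat1 u (ω.1 + ω.2)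
          + fhat1 u (ω.1 - ω.2) * Complex.exp (-(Complex.I) * (ω.2 : ℂ)))) (x y : ℝ) :
    ∑ k ∈ sa, (-1 : ℂ) ^ (k.1 + k.2) * a k * exp (-I * k.1 * x + -I * k.2 * y) =
      ∑ i ∈ su.disjSum su, Sum.elim (fun k => u k / 2) (fun k => -u k / 2) i *
        exp (Sum.elim (fun k : ℤ => -I * k) (fun k : ℤ => -I * k) i * x +
          Sum.elim (fun k : ℤ => -I * k) (fun k : ℤ => -I * (1 - k)) i * y) := by
  have hshift : exp (-I * ((y + π : ℝ) : ℂ)) = -exp (-I * y) := by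
    rw [ofReal_add, mul_add, Complex.exp_add, show -I * (π : ℂ) = -(π * I) by ring,
      exp_neg_pi_mul_I]
    ring
  rw [← fhat2_add_pi_eq_sum ha, hfa, sum_disjSum]
  simp only [Sum.elim_inl, Sum.elim_inr]
  rw [show x + π + (y + π) = x + y + 2 * π by ring, fhat1_add_two_pi,
    show x + π - (y + π) = x - y by ring, hshift, fhat1_eq_sum hu, fhat1_eq_sum hu, sum_mul,
    mul_add, mul_sum, mul_sum]
  congr 1 <;> refine sum_congr rfl fun k _ => ?_
  · rw [show -I * k * ((x + y : ℝ) : ℂ) = -I * k * x + -I * k * y by push_cast; ring]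
    ring
  · rw [mul_neg, mul_assoc, ← Complex.exp_add, show -I * k * ((x - y : ℝ) : ℂ) + -I * y =
      -I * k * x + -I * (1 - k) * y by push_cast; ring]
    ring

theorem two_mul_sum_neg_one_zpow_mul_pow_mul_pow (hu : ∀ k ∉ su, u k = 0)
    (ha : ∀ k ∉ sa, a k = 0)
    (hfa : ∀ ω : ℝ × ℝ, fhat2 a ω
      = (1 / 2 : ℂ) * (fhat1 u (ω.1 + ω.2)
          + fhat1 u (ω.1 - ω.2) * Complex.exp (-(Complex.I) * (ω.2 : ℂ)))) (p q : ℕ) :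
    2 * ∑ k ∈ sa, (-1 : ℂ) ^ (k.1 + k.2) * a k * (k.1 : ℂ) ^ p * (k.2 : ℂ) ^ q =
      ∑ k ∈ su, u k * (k : ℂ) ^ (p + q) - ∑ k ∈ su, u k * (k : ℂ) ^ p * (1 - k) ^ q := by
  have := sum_mul_pow_mul_pow_eq_of_sum_mul_cexp_eq (sum_neg_one_zpow_mul_cexp_eq hu ha hfa) p q
  have hI : (-I : ℂ) ^ p * (-I) ^ q ≠ 0 := by simp
  simp only [sum_disjSum, Sum.elim_inl, Sum.elim_inr, mul_pow, ← mul_sum, ← mul_add,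
    show ∀ c z w : ℂ, c * ((-I) ^ p * z) * ((-I) ^ q * w) = (-I) ^ p * (-I) ^ q * (c * z * w) from
      fun _ _ _ => by ring] at this
  rw [mul_left_cancel₀ hI this, mul_add, mul_sum, mul_sum, sub_eq_add_neg, ← sum_neg_distrib]
  congr 1 <;> exact sum_congr rfl fun k _ => by ring

end Filters

theorem stmt_7_general (u : ℤ → ℂ) (hufin : (Function.support u).Finite) (hu0 : fhat1 u 0 = 1)
    (n : ℕ)
    (a : ℤ × ℤ → ℂ) (hafin : (Function.support a).Finite)
    (hfa : ∀ ω : ℝ × ℝ, fhat2 a ω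
      = (1 / 2 : ℂ) * (fhat1 u (ω.1 + ω.2)
          + fhat1 u (ω.1 - ω.2) * Complex.exp (-(Complex.I) * (ω.2 : ℂ)))) :
    SumRules2D a n ↔ LPM1D u n := by
  set su := hufin.toFinset
  set sa := hafin.toFinset
  have hu : ∀ k ∉ su, u k = 0 := fun k hk => by simpa [su] using hk
  have ha : ∀ k ∉ sa, a k = 0 := fun k hk => by simpa [sa] using hk
  have hmoment := two_mul_sum_neg_one_zpow_mul_pow_mul_pow hu ha hfa
  have hmass : ∑ k ∈ su, u k = 1 := by simpa [fhat1_eq_sum hu] using hu0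
  have hfa0 : fhat2 a (0, 0) = 1 := by rw [hfa]; norm_num [hu0]
  have hsum1 (j : ℕ) : ∑ᶠ k : ℤ, u k * (k : ℂ) ^ j = ∑ k ∈ su, u k * (k : ℂ) ^ j :=
    finsum_eq_sum_of_forall_notMem_eq_zero fun k hk => by simp [hu k hk]
  have hsum2 (μ : ℕ × ℕ) :
      ∑ᶠ k : ℤ × ℤ, (-1 : ℂ) ^ (k.1 + k.2) * a k * (k.1 : ℂ) ^ μ.1 * (k.2 : ℂ) ^ μ.2 =
        ∑ k ∈ sa, (-1 : ℂ) ^ (k.1 + k.2) * a k * (k.1 : ℂ) ^ μ.1 * (k.2 : ℂ) ^ μ.2 :=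
    finsum_eq_sum_of_forall_notMem_eq_zero fun k hk => by simp [ha k hk]
  simp only [SumRules2D, LPM1D, hfa0, true_and, hsum1, hsum2]
  constructor
  · intro hsr j hj
    have hpow := two_pow_mul_sum_mul_pow_eq_sum (s := su) (w := u) (x := fun k : ℤ => (k : ℂ))
      (j := j) fun p hp => by
        have hmom := hmoment p (j - p)
        rw [hsr (p, j - p) (by simp only; omega), Nat.add_sub_cancel' hp] at hmom
        linear_combination hmom
    rw [hmass] at hpow
    rw [one_div, inv_pow]
    exact eq_inv_of_mul_eq_one_right hpow
  · intro hlpm μ hμ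
    have hquad := sum_mul_eval_eq_eval_of_sum_mul_pow_eq (x := fun k : ℤ => (k : ℂ)) hlpm
      (f := X ^ μ.1 * (1 - X) ^ μ.2) (lt_of_le_of_lt (by compute_degree) hμ)
    simp only [eval_mul, eval_pow, eval_X, eval_sub, eval_one, ← mul_assoc] at hquad
    have hmom := hmoment μ.1 μ.2
    rw [hquad, hlpm _ hμ] at hmom
    linear_combination hmom / 2

/-- `a^{2D}` has order `n` sum rules with respect to `M_{√2}` iff `u` has order
`n` linear-phase moments with phase `1/2`. -/
theorem stmt_7 (u : ℤ → ℂ) (hufin : (Function.support u).Finite) (hu0 : fhat1 u 0 = 1)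
    (n : ℕ) (hn : 1 ≤ n)
    (a : ℤ × ℤ → ℂ) (hafin : (Function.support a).Finite)
    (hfa : ∀ ω : ℝ × ℝ, fhat2 a ω
      = (1 / 2 : ℂ) * (fhat1 u (ω.1 + ω.2)
          + fhat1 u (ω.1 - ω.2) * Complex.exp (-(Complex.I) * (ω.2 : ℂ)))) :
    SumRules2D a n ↔ LPM1D u n :=
  stmt_7_general u hufin hu0 n a hafin hfa
end

section
/- Let u: ℤ → ℂ be a finitely supported 1D filter with û(0) = 1, and let a^{2D} be the 2D filter defined by â^{2D}(ω₁,ω₂) = ½[û(ω₁+ω₂) + û(ω₁−ω₂)e^{−iω₂}]. Then a^{2D} is D₄-symmetric about the point (1/2, 1/2) if and only if u(1−k) = u(k) for all k ∈ ℤ. -/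
open Complex Real

/-- The dihedral group `D₄` of eight 2×2 integer matrices (viewed over ℝ). -/
def D4 : Set (Matrix (Fin 2) (Fin 2) ℝ) :=
  {!![1, 0; 0, 1], !![-1, 0; 0, -1], !![1, 0; 0, -1], !![-1, 0; 0, 1],
   !![0, 1; 1, 0], !![0, -1; -1, 0], !![0, 1; -1, 0], !![0, -1; 1, 0]}

/-- `a` is `D₄`-symmetric about the point `c`: `a(E(k−c)+c) = a(k)` for all `k ∈ ℤ²`, `E ∈ D₄`. -/
def D4Symm (a : ℤ × ℤ → ℂ) (c : ℝ × ℝ) : Prop :=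
  ∀ E ∈ D4, ∀ k k' : ℤ × ℤ,
    (![(k'.1 : ℝ), (k'.2 : ℝ)]
      = E.mulVec ![(k.1 : ℝ) - c.1, (k.2 : ℝ) - c.2] + ![c.1, c.2]) →
    a k' = a k

/-
Distinct characters ω ↦ e^{−ik·ω}, k ∈ ℤ², are linearly independent (Dedekind), so a finitely
supported 2D filter is determined by its Fourier series; hence a^{2D} is the filter carrying u(j)/2
at (j, j) and at (j, 1 − j). About (1/2, 1/2) the group D₄ is generated by the reflections
(x, y) ↦ (x, 1 − y) and (x, y) ↦ (y, x). This filter is invariant under the first for every u,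
and under the second exactly when u(1 − k) = u(k).
-/

theorem fhat2_add {a b : ℤ × ℤ → ℂ} (ha : (Function.support a).Finite)
    (hb : (Function.support b).Finite) (ω : ℝ × ℝ) :
    fhat2 (a + b) ω = fhat2 a ω + fhat2 b ω := by
  simp only [fhat2, Pi.add_apply, add_mul]
  exact finsum_add_distrib (ha.subset (Function.support_mul_subset_left _ _))
    (hb.subset (Function.support_mul_subset_left _ _))

theorem fhat2_smul (c : ℂ) (a : ℤ × ℤ → ℂ) (ω : ℝ × ℝ) : fhat2 (c • a) ω = c * fhat2 a ω := by
  simp only [fhat2, Pi.smul_apply, smul_eq_mul, mul_assoc, mul_finsum]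

theorem fhat2_sub {a b : ℤ × ℤ → ℂ} (ha : (Function.support a).Finite)
    (hb : (Function.support b).Finite) (ω : ℝ × ℝ) :
    fhat2 (a - b) ω = fhat2 a ω - fhat2 b ω := by
  simp only [fhat2, Pi.sub_apply, sub_mul]
  exact finsum_sub_distrib (ha.subset (Function.support_mul_subset_left _ _))
    (hb.subset (Function.support_mul_subset_left _ _))

noncomputable def expChar (k : ℤ × ℤ) : Multiplicative (ℝ × ℝ) →* ℂ where
  toFun ω := Complex.exp (-(Complex.I) * ((k.1 : ℂ) * ((ω.toAdd).1 : ℂ)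
      + (k.2 : ℂ) * ((ω.toAdd).2 : ℂ)))
  map_one' := by simp
  map_mul' x y := by
    rw [← Complex.exp_add]
    simp only [toAdd_mul, Prod.fst_add, Prod.snd_add, Complex.ofReal_add]
    ring_nf

theorem int_eq_of_forall_exp_eq {m n : ℤ}
    (h : ∀ t : ℝ, Complex.exp (-(Complex.I) * (m * t)) = Complex.exp (-(Complex.I) * (n * t))) :
    m = n := by
  by_contra hmn
  have hd : (m : ℂ) - n ≠ 0 := by exact_mod_cast sub_ne_zero.mpr hmn
  -- at `t = π / (m - n)` the two sides differ by the factor `e^{-iπ} = -1`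
  set t : ℝ := Real.pi / (m - n : ℤ) with ht
  have hsplit : -(Complex.I) * (m * t) = -(Complex.I) * (n * t) + -(Real.pi * Complex.I) := by
    rw [ht]
    push_cast
    field_simp
    ring
  have key := h t
  rw [hsplit, Complex.exp_add, Complex.exp_neg, Complex.exp_pi_mul_I] at key
  have : (2 : ℂ) = 0 := by
    apply mul_right_cancel₀ (Complex.exp_ne_zero (-(Complex.I) * (n * t)))
    linear_combination -key
  norm_num at this

theorem expChar_injective : Function.Injective expChar := by
  intro k l h
  have hev (ω : ℝ × ℝ) := DFunLike.congr_fun h (Multiplicative.ofAdd ω)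
  refine Prod.ext (int_eq_of_forall_exp_eq fun t => ?_) (int_eq_of_forall_exp_eq fun t => ?_)
  · simpa [expChar] using hev (t, 0)
  · simpa [expChar] using hev (0, t)

theorem fhat2_eq_finsum_expChar (a : ℤ × ℤ → ℂ) (ω : ℝ × ℝ) :
    fhat2 a ω = ∑ᶠ k, a k * expChar k (Multiplicative.ofAdd ω) := rfl

theorem eq_zero_of_fhat2_eq_zero {b : ℤ × ℤ → ℂ} (hb : (Function.support b).Finite)
    (h : ∀ ω, fhat2 b ω = 0) : b = 0 := by
  have hsum : ∑ k ∈ hb.toFinset, b k • (expChar k : Multiplicative (ℝ × ℝ) → ℂ) = 0 := by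
    funext ω
    rw [Pi.zero_apply, ← h ω.toAdd, fhat2_eq_finsum_expChar,
      finsum_eq_sum_of_support_subset (s := hb.toFinset)]
    · simp
    · exact fun k hk => by simpa using left_ne_zero_of_mul hk
  have hli := (linearIndependent_monoidHom (Multiplicative (ℝ × ℝ)) ℂ).comp _ expChar_injective
  funext k
  by_cases hk : k ∈ hb.toFinset
  · exact linearIndependent_iff'.mp hli _ _ hsum k hk
  · simpa using hk

theorem eq_of_fhat2_eq {a b : ℤ × ℤ → ℂ} (ha : (Function.support a).Finite)
    (hb : (Function.support b).Finite) (h : ∀ ω, fhat2 a ω = fhat2 b ω) : a = b :=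
  sub_eq_zero.mp <| eq_zero_of_fhat2_eq_zero (ha.union hb |>.subset (Function.support_sub _ _))
    fun ω => by rw [fhat2_sub ha hb, h, sub_self]

section GraphFilter

variable {α β M : Type*}

theorem mem_range_graph_iff {φ : α → β} {k : α × β} :
    k ∈ Set.range (fun j => (j, φ j)) ↔ k.2 = φ k.1 :=
  ⟨by rintro ⟨j, rfl⟩; rfl, fun h => ⟨k.1, Prod.ext rfl h.symm⟩⟩

variable [DecidableEq β]

def graphFilter [Zero M] (φ : α → β) (g : α → M) (k : α × β) : M :=
  if k.2 = φ k.1 then g k.1 else 0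

theorem support_graphFilter_subset [Zero M] (φ : α → β) (g : α → M) :
    Function.support (graphFilter φ g) ⊆ (fun j => (j, φ j)) '' Function.support g := by
  intro k hk
  by_cases h : k.2 = φ k.1
  · simp only [Function.mem_support, graphFilter, h, if_true] at hk
    exact ⟨k.1, hk, Prod.ext rfl h.symm⟩
  · simp [graphFilter, h] at hk

theorem support_graphFilter_finite [Zero M] {φ : α → β} {g : α → M}
    (hg : (Function.support g).Finite) :
    (Function.support (graphFilter φ g)).Finite :=
  (hg.image _).subset (support_graphFilter_subset φ g)

theorem finsum_graphFilter_mul [NonUnitalNonAssocSemiring M] (φ : α → β) (g : α → M)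
    (f : α × β → M) :
    ∑ᶠ k, graphFilter φ g k * f k = ∑ᶠ j, g j * f (j, φ j) := calc
  _ = ∑ᶠ k ∈ Set.range (fun j => (j, φ j)), g k.1 * f k := by
    rw [finsum_mem_def]
    congr 1
    funext k
    by_cases h : k.2 = φ k.1
    · rw [Set.indicator_of_mem (mem_range_graph_iff.mpr h), graphFilter, if_pos h]
    · rw [Set.indicator_of_notMem (mt mem_range_graph_iff.mp h), graphFilter, if_neg h,
        zero_mul]
  _ = _ := finsum_mem_range fun _ _ h => congrArg Prod.fst h

end GraphFilter

theorem fhat2_graphFilter (φ : ℤ → ℤ) (g : ℤ → ℂ) (ω : ℝ × ℝ) :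
    fhat2 (graphFilter φ g) ω
      = ∑ᶠ j, g j * Complex.exp (-(Complex.I) * ((j : ℂ) * (ω.1 : ℂ) + (φ j : ℂ) * (ω.2 : ℂ))) :=
  finsum_graphFilter_mul φ g _

-- The paper's `a^{2D}`, read off from `½ [û(ω₁ + ω₂) + û(ω₁ - ω₂) e^{-iω₂}]`.
noncomputable def filter2D (u : ℤ → ℂ) : ℤ × ℤ → ℂ :=
  (1 / 2 : ℂ) • (graphFilter id u + graphFilter (fun j => 1 - j) u)

theorem filter2D_apply (u : ℤ → ℂ) (x y : ℤ) :
    filter2D u (x, y) = (1 / 2 : ℂ) * ((if y = x then u x else 0) + if y = 1 - x then u x else 0) :=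
  rfl

theorem support_filter2D_finite {u : ℤ → ℂ} (hu : (Function.support u).Finite) :
    (Function.support (filter2D u)).Finite :=
  ((support_graphFilter_finite hu).union (support_graphFilter_finite hu)).subset <|
    (Function.support_const_smul_subset _ _).trans (Function.support_add _ _)

theorem fhat2_filter2D {u : ℤ → ℂ} (hu : (Function.support u).Finite) (ω : ℝ × ℝ) :
    fhat2 (filter2D u) ω = (1 / 2 : ℂ) * (fhat1 u (ω.1 + ω.2)
      + fhat1 u (ω.1 - ω.2) * Complex.exp (-(Complex.I) * (ω.2 : ℂ))) := by
  rw [filter2D, fhat2_smul, fhat2_add (support_graphFilter_finite hu)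
    (support_graphFilter_finite hu), fhat2_graphFilter, fhat2_graphFilter, fhat1, fhat1,
    finsum_mul]
  congr 2 <;> refine finsum_congr fun j => ?_
  · push_cast [id]
    ring_nf
  · rw [mul_assoc, ← Complex.exp_add]
    push_cast
    ring_nf

lemma D4_half_cases {E : Matrix (Fin 2) (Fin 2) ℝ} (hE : E ∈ D4) {k k' : ℤ × ℤ}
    (h : ![(k'.1 : ℝ), (k'.2 : ℝ)]
      = E.mulVec ![(k.1 : ℝ) - 1 / 2, (k.2 : ℝ) - 1 / 2] + ![1 / 2, 1 / 2]) :
    k' = k ∨ k' = (1 - k.1, 1 - k.2) ∨ k' = (k.1, 1 - k.2) ∨ k' = (1 - k.1, k.2) ∨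
      k' = k.swap ∨ k' = (1 - k.2, 1 - k.1) ∨ k' = (k.2, 1 - k.1) ∨ k' = (1 - k.2, k.1) := by
  have h0 := congrFun h 0
  have h1 := congrFun h 1
  simp only [D4, Set.mem_insert_iff, Set.mem_singleton_iff] at hE
  rcases hE with rfl | rfl | rfl | rfl | rfl | rfl | rfl | rfl <;>
    simp only [Matrix.mulVec_cons, Matrix.mulVec_empty, Matrix.cons_val_zero, Matrix.cons_val_one,
      Matrix.cons_val_fin_one, Matrix.head_cons, Matrix.tail_cons, Pi.add_apply, Pi.smul_apply,
      Function.comp_apply, smul_eq_mul, mul_one, mul_zero, mul_neg, neg_sub, add_zero, zero_add,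
      sub_add_cancel, Int.cast_inj] at h0 h1 <;>
    (try ring_nf at h0) <;> (try ring_nf at h1) <;> norm_cast at h0 h1 <;>
    simp only [Prod.ext_iff, Prod.fst_swap, Prod.snd_swap] <;> omega

theorem d4Symm_half_iff (a : ℤ × ℤ → ℂ) :
    D4Symm a (1 / 2, 1 / 2) ↔
      (∀ x y, a (x, 1 - y) = a (x, y)) ∧ ∀ x y, a (y, x) = a (x, y) := by
  constructor
  · intro ha
    refine ⟨fun x y => ha !![1, 0; 0, -1] (by simp [D4]) (x, y) (x, 1 - y) ?_,
      fun x y => ha !![0, 1; 1, 0] (by simp [D4]) (x, y) (y, x) ?_⟩ <;>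
    · ext i
      fin_cases i <;>
      simp only [Fin.zero_eta, Fin.mk_one, Matrix.mulVec_cons, Matrix.mulVec_empty,
        Matrix.cons_val_zero, Matrix.cons_val_one, Matrix.cons_val_fin_one, Matrix.head_cons,
        Matrix.tail_cons, Pi.add_apply, Pi.smul_apply, Function.comp_apply, smul_eq_mul, mul_one,
        mul_zero, mul_neg, neg_sub, add_zero, zero_add, Int.cast_sub, Int.cast_one] <;>
      ring
  · rintro ⟨hrefl, hswap⟩ E hE k k' h
    have hflip x y : a (1 - x, y) = a (x, y) := by rw [hswap, hrefl, hswap]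
    rcases D4_half_cases hE h with rfl | rfl | rfl | rfl | rfl | rfl | rfl | rfl
    · rfl
    · rw [hflip, hrefl]
    · rw [hrefl]
    · rw [hflip]
    · exact hswap _ _
    · rw [hflip, hrefl, hswap]
    · rw [hrefl, hswap]
    · rw [hflip, hswap]

theorem filter2D_reflect (u : ℤ → ℂ) (x y : ℤ) : filter2D u (x, 1 - y) = filter2D u (x, y) := by
  simp only [filter2D_apply, show 1 - y = x ↔ y = 1 - x by omega, sub_right_inj, add_comm]

theorem filter2D_swap_iff (u : ℤ → ℂ) :
    (∀ x y, filter2D u (y, x) = filter2D u (x, y)) ↔ ∀ k, u (1 - k) = u k := by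
  constructor
  · intro h k
    simpa [filter2D_apply, show k ≠ 1 - k by omega, show 1 - k ≠ k by omega] using h k (1 - k)
  · intro hu x y
    simp only [filter2D_apply]
    by_cases hxy : y = x
    · subst hxy; rfl
    · by_cases hx : y = 1 - x
      · subst hx
        simp [hu, hxy, Ne.symm hxy]
      · simp [hxy, Ne.symm hxy, hx, show x ≠ 1 - y by omega]

theorem stmt_9_general (u : ℤ → ℂ) (hufin : (Function.support u).Finite)
    (a : ℤ × ℤ → ℂ) (hafin : (Function.support a).Finite)
    (hfa : ∀ ω : ℝ × ℝ, fhat2 a ω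
      = (1 / 2 : ℂ) * (fhat1 u (ω.1 + ω.2)
          + fhat1 u (ω.1 - ω.2) * Complex.exp (-(Complex.I) * (ω.2 : ℂ)))) :
    D4Symm a (1 / 2, 1 / 2) ↔ ∀ k : ℤ, u (1 - k) = u k := by
  obtain rfl : a = filter2D u :=
    eq_of_fhat2_eq hafin (support_filter2D_finite hufin) fun ω => by rw [hfa, fhat2_filter2D hufin]
  rw [d4Symm_half_iff, and_iff_right (filter2D_reflect u), filter2D_swap_iff]

/-- `a^{2D}` is `D₄`-symmetric about `(1/2,1/2)` iff `u(1−k) = u(k)` for all `k`. -/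
theorem stmt_9 (u : ℤ → ℂ) (hufin : (Function.support u).Finite) (hu0 : fhat1 u 0 = 1)
    (a : ℤ × ℤ → ℂ) (hafin : (Function.support a).Finite)
    (hfa : ∀ ω : ℝ × ℝ, fhat2 a ω
      = (1 / 2 : ℂ) * (fhat1 u (ω.1 + ω.2)
          + fhat1 u (ω.1 - ω.2) * Complex.exp (-(Complex.I) * (ω.2 : ℂ)))) :
    D4Symm a (1 / 2, 1 / 2) ↔ ∀ k : ℤ, u (1 - k) = u k :=
  stmt_9_general u hufin a hafin hfa
end

section
/- Let u, v: ℤ → ℂ be finitely supported 1D filters with |û(ω)|² + |v̂(ω)|² = 1 for all ω ∈ ℝ. Define 2D filters a^{2D} and b₂ by â^{2D}(ω₁,ω₂) = ½[û(ω₁+ω₂) + û(ω₁−ω₂)e^{−iω₂}] and b̂₂(ω₁,ω₂) = ½[v̂(ω₁+ω₂) + v̂(ω₁−ω₂)e^{−iω₂}], and set b̂₁(ω) := e^{−iω₁}·conj(â^{2D}(ω+(π,π))), b̂₃(ω) := e^{−iω₁}·conj(b̂₂(ω+(π,π))). Then {a^{2D}; b₁, b₂, b₃} is a quincunx tight framelet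 filter bank. -/
open Complex Real

lemma exp_shift_pi (x : ℝ) :
    Complex.exp (-(Complex.I) * ((x + π : ℝ) : ℂ)) = - Complex.exp (-(Complex.I) * (x : ℂ)) := by
  push_cast
  rw [mul_add, Complex.exp_add]
  rw [show -(Complex.I) * (π : ℂ) = -((π : ℂ) * Complex.I) from by ring,
    Complex.exp_neg, Complex.exp_pi_mul_I]
  norm_num

lemma exp_shift_two_pi (x : ℝ) :
    Complex.exp (-(Complex.I) * ((x + π + π : ℝ) : ℂ)) = Complex.exp (-(Complex.I) * (x : ℂ)) := by
  rw [exp_shift_pi (x + π), exp_shift_pi x, neg_neg]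

lemma fhat1_periodic (u : ℤ → ℂ) (x : ℝ) : fhat1 u (x + 2 * π) = fhat1 u x := by
  unfold fhat1
  apply finsum_congr
  intro k
  congr 1
  push_cast
  rw [mul_add, Complex.exp_add,
    show -(Complex.I) * (k : ℂ) * (2 * (π : ℂ)) = ((-k : ℤ) : ℂ) * (2 * (π : ℂ) * Complex.I) from by
      push_cast; ring,
    Complex.exp_int_mul_two_pi_mul_I]
  simp

lemma normSq_exp_neg_I (x : ℝ) : Complex.normSq (Complex.exp (-(Complex.I) * (x : ℂ))) = 1 := by
  rw [Complex.normSq_eq_norm_sq, Complex.norm_exp]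
  simp

lemma conj_exp_mul (x : ℝ) :
    (starRingEnd ℂ) (Complex.exp (-(Complex.I) * (x : ℂ))) * Complex.exp (-(Complex.I) * (x : ℂ)) = 1 := by
  rw [← Complex.exp_conj, ← Complex.exp_add]
  simp

lemma key_par (p q e : ℂ) (he : Complex.normSq e = 1) :
    Complex.normSq (p + q * e) + Complex.normSq (p - q * e)
      = 2 * Complex.normSq p + 2 * Complex.normSq q := by
  simp only [Complex.normSq_apply, Complex.add_re, Complex.add_im, Complex.sub_re,
    Complex.sub_im, Complex.mul_re, Complex.mul_im] at he ⊢
  nlinarith [he]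

lemma normSq_half : Complex.normSq (1 / 2 : ℂ) = 1 / 4 := by
  norm_num [Complex.normSq_apply]

/-- the double canonical quincunx tight framelet filter bank built from a pair
of 1D filters `u, v` with `|û|² + |v̂|² = 1`. -/
theorem stmt_11 (u v : ℤ → ℂ)
    (hufin : (Function.support u).Finite) (hvfin : (Function.support v).Finite)
    (huv : ∀ ω : ℝ, Complex.normSq (fhat1 u ω) + Complex.normSq (fhat1 v ω) = 1)
    (a b₁ b₂ b₃ : ℤ × ℤ → ℂ)
    (hafin : (Function.support a).Finite) (hb₁fin : (Function.support b₁).Finite)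
    (hb₂fin : (Function.support b₂).Finite) (hb₃fin : (Function.support b₃).Finite)
    (hfa : ∀ ω : ℝ × ℝ, fhat2 a ω
      = (1 / 2 : ℂ) * (fhat1 u (ω.1 + ω.2)
          + fhat1 u (ω.1 - ω.2) * Complex.exp (-(Complex.I) * (ω.2 : ℂ))))
    (hb₂ : ∀ ω : ℝ × ℝ, fhat2 b₂ ω
      = (1 / 2 : ℂ) * (fhat1 v (ω.1 + ω.2)
          + fhat1 v (ω.1 - ω.2) * Complex.exp (-(Complex.I) * (ω.2 : ℂ))))
    (hb₁ : ∀ ω : ℝ × ℝ, fhat2 b₁ ω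
      = Complex.exp (-(Complex.I) * (ω.1 : ℂ)) * (starRingEnd ℂ) (fhat2 a (ω.1 + π, ω.2 + π)))
    (hb₃ : ∀ ω : ℝ × ℝ, fhat2 b₃ ω
      = Complex.exp (-(Complex.I) * (ω.1 : ℂ)) * (starRingEnd ℂ) (fhat2 b₂ (ω.1 + π, ω.2 + π))) :
    (∀ ω : ℝ × ℝ, Complex.normSq (fhat2 a ω) + Complex.normSq (fhat2 b₁ ω)
        + Complex.normSq (fhat2 b₂ ω) + Complex.normSq (fhat2 b₃ ω) = 1) ∧
    (∀ ω : ℝ × ℝ, (starRingEnd ℂ) (fhat2 a ω) * fhat2 a (ω.1 + π, ω.2 + π)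
        + (starRingEnd ℂ) (fhat2 b₁ ω) * fhat2 b₁ (ω.1 + π, ω.2 + π)
        + (starRingEnd ℂ) (fhat2 b₂ ω) * fhat2 b₂ (ω.1 + π, ω.2 + π)
        + (starRingEnd ℂ) (fhat2 b₃ ω) * fhat2 b₃ (ω.1 + π, ω.2 + π) = 0) := by
  -- shifted-by-(π,π) formulas for a and b₂
  have hA' : ∀ ω : ℝ × ℝ, fhat2 a (ω.1 + π, ω.2 + π)
      = (1 / 2 : ℂ) * (fhat1 u (ω.1 + ω.2)
          - fhat1 u (ω.1 - ω.2) * Complex.exp (-(Complex.I) * (ω.2 : ℂ))) := by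
    intro ω
    have h := hfa (ω.1 + π, ω.2 + π)
    dsimp only at h
    rw [show ω.1 + π + (ω.2 + π) = (ω.1 + ω.2) + 2 * π from by ring,
      show ω.1 + π - (ω.2 + π) = ω.1 - ω.2 from by ring,
      fhat1_periodic, exp_shift_pi] at h
    rw [h]; ring
  have hC' : ∀ ω : ℝ × ℝ, fhat2 b₂ (ω.1 + π, ω.2 + π)
      = (1 / 2 : ℂ) * (fhat1 v (ω.1 + ω.2)
          - fhat1 v (ω.1 - ω.2) * Complex.exp (-(Complex.I) * (ω.2 : ℂ))) := by
    intro ω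
    have h := hb₂ (ω.1 + π, ω.2 + π)
    dsimp only at h
    rw [show ω.1 + π + (ω.2 + π) = (ω.1 + ω.2) + 2 * π from by ring,
      show ω.1 + π - (ω.2 + π) = ω.1 - ω.2 from by ring,
      fhat1_periodic, exp_shift_pi] at h
    rw [h]; ring
  -- (2π,2π)-periodicity of a and b₂
  have hpera : ∀ ω : ℝ × ℝ, fhat2 a (ω.1 + π + π, ω.2 + π + π) = fhat2 a ω := by
    intro ω
    rw [hfa (ω.1 + π + π, ω.2 + π + π), hfa ω]
    dsimp only
    rw [show ω.1 + π + π + (ω.2 + π + π) = ((ω.1 + ω.2) + 2 * π) + 2 * π from by ring,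
      show ω.1 + π + π - (ω.2 + π + π) = ω.1 - ω.2 from by ring,
      fhat1_periodic, fhat1_periodic, exp_shift_two_pi]
  have hperc : ∀ ω : ℝ × ℝ, fhat2 b₂ (ω.1 + π + π, ω.2 + π + π) = fhat2 b₂ ω := by
    intro ω
    rw [hb₂ (ω.1 + π + π, ω.2 + π + π), hb₂ ω]
    dsimp only
    rw [show ω.1 + π + π + (ω.2 + π + π) = ((ω.1 + ω.2) + 2 * π) + 2 * π from by ring,
      show ω.1 + π + π - (ω.2 + π + π) = ω.1 - ω.2 from by ring,
      fhat1_periodic, fhat1_periodic, exp_shift_two_pi]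
  constructor
  · intro ω
    have h1 := huv (ω.1 + ω.2)
    have h2 := huv (ω.1 - ω.2)
    have he := normSq_exp_neg_I ω.2
    rw [hfa ω, hb₂ ω, hb₁ ω, hb₃ ω, hA' ω, hC' ω]
    simp only [Complex.normSq_mul, Complex.normSq_conj, normSq_exp_neg_I, one_mul, normSq_half]
    have k1 := key_par (fhat1 u (ω.1 + ω.2)) (fhat1 u (ω.1 - ω.2))
      (Complex.exp (-(Complex.I) * (ω.2 : ℂ))) he
    have k2 := key_par (fhat1 v (ω.1 + ω.2)) (fhat1 v (ω.1 - ω.2))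
      (Complex.exp (-(Complex.I) * (ω.2 : ℂ))) he
    nlinarith [k1, k2, h1, h2]
  · intro ω
    have hff := conj_exp_mul ω.1
    have hB₁' : fhat2 b₁ (ω.1 + π, ω.2 + π)
        = -(Complex.exp (-(Complex.I) * (ω.1 : ℂ)) * (starRingEnd ℂ) (fhat2 a ω)) := by
      have h := hb₁ (ω.1 + π, ω.2 + π)
      dsimp only at h
      rw [hpera ω, exp_shift_pi] at h
      rw [h]; ring
    have hB₃' : fhat2 b₃ (ω.1 + π, ω.2 + π)
        = -(Complex.exp (-(Complex.I) * (ω.1 : ℂ)) * (starRingEnd ℂ) (fhat2 b₂ ω)) := by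
      have h := hb₃ (ω.1 + π, ω.2 + π)
      dsimp only at h
      rw [hperc ω, exp_shift_pi] at h
      rw [h]; ring
    rw [hb₁ ω, hb₃ ω, hB₁', hB₃']
    simp only [map_mul, map_neg, Complex.conj_conj]
    linear_combination
      (-(fhat2 a (ω.1 + π, ω.2 + π)) * (starRingEnd ℂ) (fhat2 a ω)
        - fhat2 b₂ (ω.1 + π, ω.2 + π) * (starRingEnd ℂ) (fhat2 b₂ ω)) * hff
end

section
/- Let s ≥ 1 and L ≥ 0 be integers. Let b₀, b₁, …, b_{2s−1}: ℤ → ℂ be finitely supported 1D filters such that {b₀; b₁, …, b_{2s−1}} is a tight 2-framelet filter bank satisfying the canonical property b̂_{2j+1}(ω) = e^{−iω}·conj(b̂_{2j}(ω+π)) for j = 0, …, s−1. Let u₀, …, u_L: ℤ → ℂ be finitely supported 1D filters with ∑_{k=0}^{L} |û_k(ω)|² = 1 for all ω ∈ ℝ. Define 2D filters b^{2D}_{j,k} for j = 0,…,2s−1 and k = 0,…,L by b̂^{2D}_{2j,k}(ω₁,ω₂) = b̂_{2j}(ω₁)·û_k(ω₂) and b̂^{2D}_{2j+1,k}(ω₁,ω₂)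 = b̂_{2j+1}(ω₁)·conj(û_k(ω₂+π)). Then the collection of these 2s(L+1) 2D filters, with b^{2D}_{0,0} as low-pass filter and the remaining 2s(L+1)−1 filters as high-pass filters, is a quincunx tight framelet filter bank, and moreover b̂^{2D}_{2j+1,k}(ω) = e^{−iω₁}·conj(b̂^{2D}_{2j,k}(ω+(π,π))) for all j = 0,…,s−1, k = 0,…,L and all ω ∈ ℝ² (so it is an s(L+1)-multiple canonical quincunx tight framelet filter bank). -/
open Complex Real

private lemma aux_sum_double {M : Type*} [AddCommMonoid M] (n : ℕ) (f : ℕ → M) :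
    ∑ i ∈ Finset.range (2 * n), f i = ∑ i ∈ Finset.range n, (f (2 * i) + f (2 * i + 1)) := by
  induction n with
  | zero => simp
  | succ m ih =>
      rw [Finset.sum_range_succ, show 2 * (m + 1) = 2 * m + 1 + 1 by ring,
        Finset.sum_range_succ, Finset.sum_range_succ, ih, add_assoc]

private lemma aux_head {M : Type*} [AddCommMonoid M] (n : ℕ) (hn : 1 ≤ n) (g : ℕ → M) :
    g 0 + ∑ j ∈ Finset.Icc 1 (n - 1), g j = ∑ j ∈ Finset.range n, g j := by
  obtain ⟨m, rfl⟩ : ∃ m, n = m + 1 := ⟨n - 1, by omega⟩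
  rw [show m + 1 - 1 = m by omega, ← Finset.Ico_add_one_right_eq_Icc, Finset.sum_Ico_eq_sum_range,
    show m + 1 - 1 = m by omega, Finset.sum_range_succ' g m, add_comm]
  congr 1
  exact Finset.sum_congr rfl fun i _ => by rw [Nat.add_comm]

private lemma fhat1_per (v : ℤ → ℂ) (ω : ℝ) : fhat1 v (ω + 2 * π) = fhat1 v ω := by
  unfold fhat1
  apply finsum_congr
  intro k
  congr 1
  rw [show (-(Complex.I) * (k : ℂ) * ((ω + 2 * π : ℝ) : ℂ))
      = -(Complex.I) * (k : ℂ) * (ω : ℂ) + ((-k : ℤ) : ℂ) * (2 * (π : ℂ) * Complex.I) by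
      push_cast; ring,
    Complex.exp_add, Complex.exp_int_mul_two_pi_mul_I, mul_one]

private lemma fhat1_per' (v : ℤ → ℂ) (ω : ℝ) : fhat1 v (ω + π + π) = fhat1 v ω := by
  rw [show ω + π + π = ω + 2 * π by ring, fhat1_per]

private lemma conj_exp_neg (ω : ℝ) :
    (starRingEnd ℂ) (Complex.exp (-(Complex.I) * (ω : ℂ))) = Complex.exp (Complex.I * (ω : ℂ)) := by
  rw [← Complex.exp_conj]
  congr 1
  simp [Complex.conj_ofReal]

private lemma exp_neg_pi : Complex.exp (-(Complex.I) * ((π : ℝ) : ℂ)) = -1 := by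
  rw [show -(Complex.I) * ((π : ℝ) : ℂ) = -((π : ℂ) * Complex.I) by push_cast; ring,
    Complex.exp_neg, Complex.exp_pi_mul_I]
  norm_num

/-- an `s`-multiple canonical tight 2-framelet filter bank tensored with a
family `u₀,…,u_L` satisfying `∑ |û_k|² = 1` yields an `s(L+1)`-multiple canonical quincunx
tight framelet filter bank. -/
theorem stmt_14 (s : ℕ) (hs : 1 ≤ s) (L : ℕ)
    (b : ℕ → ℤ → ℂ) (hbfin : ∀ j, (Function.support (b j)).Finite)
    (hbank1 : ∀ ω : ℝ, Complex.normSq (fhat1 (b 0) ω)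
      + ∑ ℓ ∈ Finset.Icc 1 (2 * s - 1), Complex.normSq (fhat1 (b ℓ) ω) = 1)
    (hbank2 : ∀ ω : ℝ, (starRingEnd ℂ) (fhat1 (b 0) ω) * fhat1 (b 0) (ω + π)
      + ∑ ℓ ∈ Finset.Icc 1 (2 * s - 1),
          (starRingEnd ℂ) (fhat1 (b ℓ) ω) * fhat1 (b ℓ) (ω + π) = 0)
    (hcan : ∀ j < s, ∀ ω : ℝ, fhat1 (b (2 * j + 1)) ω
      = Complex.exp (-(Complex.I) * (ω : ℂ)) * (starRingEnd ℂ) (fhat1 (b (2 * j)) (ω + π)))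
    (u : ℕ → ℤ → ℂ) (hufin : ∀ k, (Function.support (u k)).Finite)
    (hsos : ∀ ω : ℝ, ∑ k ∈ Finset.range (L + 1), Complex.normSq (fhat1 (u k) ω) = 1)
    (B : ℕ → ℕ → ℤ × ℤ → ℂ)
    (hBfin : ∀ j k, (Function.support (B j k)).Finite)
    (hBeven : ∀ j < s, ∀ k ≤ L, ∀ ω : ℝ × ℝ,
      fhat2 (B (2 * j) k) ω = fhat1 (b (2 * j)) ω.1 * fhat1 (u k) ω.2)
    (hBodd : ∀ j < s, ∀ k ≤ L, ∀ ω : ℝ × ℝ,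
      fhat2 (B (2 * j + 1) k) ω
        = fhat1 (b (2 * j + 1)) ω.1 * (starRingEnd ℂ) (fhat1 (u k) (ω.2 + π))) :
    -- the 2s(L+1) filters (with B 0 0 as low-pass) form a quincunx tight framelet filter bank
    (∀ ω : ℝ × ℝ, ∑ j ∈ Finset.range (2 * s), ∑ k ∈ Finset.range (L + 1),
        Complex.normSq (fhat2 (B j k) ω) = 1) ∧
    (∀ ω : ℝ × ℝ, ∑ j ∈ Finset.range (2 * s), ∑ k ∈ Finset.range (L + 1),
        (starRingEnd ℂ) (fhat2 (B j k) ω) * fhat2 (B j k) (ω.1 + π, ω.2 + π) = 0) ∧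
    -- it is s(L+1)-multiple canonical
    (∀ j < s, ∀ k ≤ L, ∀ ω : ℝ × ℝ,
      fhat2 (B (2 * j + 1) k) ω
        = Complex.exp (-(Complex.I) * (ω.1 : ℂ)) *
            (starRingEnd ℂ) (fhat2 (B (2 * j) k) (ω.1 + π, ω.2 + π))) := by
  have hmemL : ∀ k ∈ Finset.range (L + 1), k ≤ L := fun k hk => by
    simpa [Nat.lt_succ_iff] using Finset.mem_range.mp hk
  refine ⟨?_, ?_, ?_⟩
  · -- Part 1
    intro ω
    rw [aux_sum_double s (fun j => ∑ k ∈ Finset.range (L + 1),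
      Complex.normSq (fhat2 (B j k) ω))]
    have key : ∀ j ∈ Finset.range s,
        ((∑ k ∈ Finset.range (L + 1), Complex.normSq (fhat2 (B (2 * j) k) ω))
          + ∑ k ∈ Finset.range (L + 1), Complex.normSq (fhat2 (B (2 * j + 1) k) ω))
        = Complex.normSq (fhat1 (b (2 * j)) ω.1)
          + Complex.normSq (fhat1 (b (2 * j + 1)) ω.1) := by
      intro j hj
      have hjs := Finset.mem_range.mp hj
      have h1 : ∑ k ∈ Finset.range (L + 1), Complex.normSq (fhat2 (B (2 * j) k) ω)
          = Complex.normSq (fhat1 (b (2 * j)) ω.1) := by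
        calc ∑ k ∈ Finset.range (L + 1), Complex.normSq (fhat2 (B (2 * j) k) ω)
            = ∑ k ∈ Finset.range (L + 1),
              Complex.normSq (fhat1 (b (2 * j)) ω.1) * Complex.normSq (fhat1 (u k) ω.2) :=
              Finset.sum_congr rfl fun k hk => by
                rw [hBeven j hjs k (hmemL k hk) ω, Complex.normSq_mul]
          _ = Complex.normSq (fhat1 (b (2 * j)) ω.1)
              * ∑ k ∈ Finset.range (L + 1), Complex.normSq (fhat1 (u k) ω.2) := by
              rw [Finset.mul_sum]
          _ = _ := by rw [hsos, mul_one]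
      have h2 : ∑ k ∈ Finset.range (L + 1), Complex.normSq (fhat2 (B (2 * j + 1) k) ω)
          = Complex.normSq (fhat1 (b (2 * j + 1)) ω.1) := by
        calc ∑ k ∈ Finset.range (L + 1), Complex.normSq (fhat2 (B (2 * j + 1) k) ω)
            = ∑ k ∈ Finset.range (L + 1),
              Complex.normSq (fhat1 (b (2 * j + 1)) ω.1)
                * Complex.normSq (fhat1 (u k) (ω.2 + π)) :=
              Finset.sum_congr rfl fun k hk => by
                rw [hBodd j hjs k (hmemL k hk) ω, Complex.normSq_mul, Complex.normSq_conj]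
          _ = Complex.normSq (fhat1 (b (2 * j + 1)) ω.1)
              * ∑ k ∈ Finset.range (L + 1), Complex.normSq (fhat1 (u k) (ω.2 + π)) := by
              rw [Finset.mul_sum]
          _ = _ := by rw [hsos, mul_one]
      rw [h1, h2]
    rw [Finset.sum_congr rfl key,
      ← aux_sum_double s (fun j => Complex.normSq (fhat1 (b j) ω.1)),
      ← aux_head (2 * s) (by omega) (fun j => Complex.normSq (fhat1 (b j) ω.1))]
    exact hbank1 ω.1
  · -- Part 2
    intro ω
    rw [aux_sum_double s (fun j => ∑ k ∈ Finset.range (L + 1),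
      (starRingEnd ℂ) (fhat2 (B j k) ω) * fhat2 (B j k) (ω.1 + π, ω.2 + π))]
    apply Finset.sum_eq_zero
    intro j hj
    have hjs := Finset.mem_range.mp hj
    set C : ℂ := (starRingEnd ℂ) (fhat1 (b (2 * j)) ω.1) * fhat1 (b (2 * j)) (ω.1 + π) with hC
    set S : ℂ := ∑ k ∈ Finset.range (L + 1),
      (starRingEnd ℂ) (fhat1 (u k) ω.2) * fhat1 (u k) (ω.2 + π) with hS
    have h1 : ∑ k ∈ Finset.range (L + 1),
        (starRingEnd ℂ) (fhat2 (B (2 * j) k) ω) * fhat2 (B (2 * j) k) (ω.1 + π, ω.2 + π)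
        = C * S := by
      rw [hS, Finset.mul_sum]
      refine Finset.sum_congr rfl fun k hk => ?_
      rw [hBeven j hjs k (hmemL k hk) ω, hBeven j hjs k (hmemL k hk) (ω.1 + π, ω.2 + π)]
      simp only [map_mul]
      ring
    have hDC : (starRingEnd ℂ) (fhat1 (b (2 * j + 1)) ω.1) * fhat1 (b (2 * j + 1)) (ω.1 + π)
        = -C := by
      rw [hcan j hjs ω.1, hcan j hjs (ω.1 + π)]
      rw [show ((ω.1 + π : ℝ) : ℂ) = (ω.1 : ℂ) + (π : ℂ) by push_cast; ring]
      rw [fhat1_per' (b (2 * j)) ω.1]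
      rw [map_mul, conj_exp_neg, Complex.conj_conj,
        show (-Complex.I * ((ω.1 : ℂ) + (π : ℂ)))
            = -Complex.I * (ω.1 : ℂ) + -Complex.I * ((π : ℝ) : ℂ) by push_cast; ring,
        Complex.exp_add, exp_neg_pi]
      have he : Complex.exp (Complex.I * (ω.1 : ℂ)) * Complex.exp (-Complex.I * (ω.1 : ℂ)) = 1 := by
        rw [← Complex.exp_add]; simp
      linear_combination (-C) * he
    have h2 : ∑ k ∈ Finset.range (L + 1),
        (starRingEnd ℂ) (fhat2 (B (2 * j + 1) k) ω)
          * fhat2 (B (2 * j + 1) k) (ω.1 + π, ω.2 + π)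
        = -C * S := by
      rw [← hDC, hS, Finset.mul_sum]
      refine Finset.sum_congr rfl fun k hk => ?_
      rw [hBodd j hjs k (hmemL k hk) ω, hBodd j hjs k (hmemL k hk) (ω.1 + π, ω.2 + π)]
      simp only [map_mul, Complex.conj_conj]
      rw [fhat1_per' (u k) ω.2]
      ring
    rw [h1, h2]
    ring
  · -- Part 3
    intro j hj k hk ω
    rw [hBodd j hj k hk ω, hcan j hj ω.1, hBeven j hj k hk (ω.1 + π, ω.2 + π)]
    simp only [map_mul]
    ring
end
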